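/- arXiv:2410.16830 — 2 statements merged into one kernel-verified Lean document; each statement's English description precedes it below -/
import Mathlib

section
/- Let T₁ and T₂ be two spanning trees of a finite connected graph G such that the edge set of T₂ contains exactly k edges not in T₁. Then diam(T₂)/(k+1) − 1 ≤ diam(T₁) ≤ (k+1)·diam(T₂) + k, where diam denotes the graph diameter (maximal graph distance between vertices) of the tree. -/
/-!
Walk along a shortest `T₁`-path between two vertices at distance `diam T₁`. Its edges that are
not in `T₂` (at most `k`, since trees on the same vertices have equally many edges) cut it into at
most `k + 1` runs of `T₂`-edges; each run is a path in the tree `T₂`, hence has length at most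
`diam T₂`. This gives `diam T₁ ≤ (k + 1) diam T₂ + k`, and exchanging the trees gives the other
inequality.
-/

namespace SimpleGraph

variable {V : Type*} {G H T : SimpleGraph V} {u v : V}

lemma IsAcyclic.length_eq_dist_of_isPath (hG : G.IsAcyclic) {p : G.Walk u v} (hp : p.IsPath) :
    p.length = G.dist u v := by
  obtain ⟨q, hq, hq_dist⟩ := p.reachable.exists_path_of_dist
  have hpq : (⟨p, hp⟩ : G.Path u v) = ⟨q, hq⟩ := (hG.subsingleton_path u v).elim _ _
  rw [← hq_dist, show p = q from congrArg Subtype.val hpq]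

lemma IsTree.length_le_diam_of_isPath [Finite V] (hG : G.IsTree) {p : G.Walk u v}
    (hp : p.IsPath) : p.length ≤ G.diam := by
  have : Nonempty V := hG.connected.nonempty
  rw [hG.isAcyclic.length_eq_dist_of_isPath hp]
  exact dist_le_diam (connected_iff_ediam_ne_top.mp hG.connected)

lemma IsTree.ncard_edgeSet_add_one [Finite V] (hG : G.IsTree) :
    G.edgeSet.ncard + 1 = Nat.card V := by
  have := Fintype.ofFinite V
  classical
  rw [← coe_edgeFinset, Set.ncard_coe_finset, Nat.card_eq_fintype_card]
  exact hG.card_edgeFinset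

lemma IsTree.ncard_edgeSet_sdiff_comm [Finite V] (hG : G.IsTree) (hT : T.IsTree) :
    (G.edgeSet \ T.edgeSet).ncard = (T.edgeSet \ G.edgeSet).ncard := by
  have hG_card := hG.ncard_edgeSet_add_one
  have hT_card := hT.ncard_edgeSet_add_one
  exact (Set.ncard_eq_ncard_iff_ncard_sdiff_eq_ncard_sdiff).mp (by omega)

section CountOutside

variable [DecidablePred (· ∈ T.edgeSet)]

lemma Walk.IsTrail.countP_not_mem_edgeSet_le [Finite V] {w : H.Walk u v} (hw : w.IsTrail) :
    w.edges.countP (· ∉ T.edgeSet) ≤ (H.edgeSet \ T.edgeSet).ncard := by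
  classical
  set outside := w.edges.filter (· ∉ T.edgeSet)
  have h_sub : (outside.toFinset : Set (Sym2 V)) ⊆ H.edgeSet \ T.edgeSet := by
    intro e he
    simp only [Finset.mem_coe, List.mem_toFinset, List.mem_filter, outside,
      decide_eq_true_eq] at he
    exact ⟨w.edges_subset_edgeSet he.1, he.2⟩
  calc w.edges.countP (· ∉ T.edgeSet)
      = outside.toFinset.card := by
        rw [List.countP_eq_length_filter, List.toFinset_card_of_nodup (hw.edges_nodup.filter _)]
    _ ≤ (H.edgeSet \ T.edgeSet).ncard := by
        rw [← Set.ncard_coe_finset]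
        exact Set.ncard_le_ncard h_sub

/-- The witness `q` is the maximal initial run of `T`-edges of `w`. -/
lemma Walk.IsPath.exists_isPath_length_le {d : ℕ}
    (hd : ∀ ⦃x y : V⦄ (q : T.Walk x y), q.IsPath → q.length ≤ d) :
    ∀ {u v : V} (w : H.Walk u v), w.IsPath →
      ∃ (x : V) (q : T.Walk u x), q.IsPath ∧ q.support ⊆ w.support ∧
        w.length ≤ w.edges.countP (· ∉ T.edgeSet) * (d + 1) + q.length := by
  intro u v w hw
  induction w with
  | nil => exact ⟨_, Walk.nil, Walk.IsPath.nil, by simp, by simp⟩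
  | @cons a b c hab w ih =>
    obtain ⟨hw_path, ha⟩ := Walk.cons_isPath_iff hab w |>.mp hw
    obtain ⟨x, q, hq, hq_sub, hlen⟩ := ih hw_path
    by_cases he : s(a, b) ∈ T.edgeSet
    · have hab_T : T.Adj a b := he
      have ha_q : a ∉ q.support := fun h => ha (hq_sub h)
      refine ⟨x, .cons hab_T q, hq.cons ha_q, ?_, ?_⟩
      · simpa using List.cons_subset_cons a hq_sub
      · simp only [Walk.length_cons, Walk.edges_cons, List.countP_cons, he, not_true_eq_false,
          decide_false, Bool.false_eq_true, if_false, add_zero]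
        omega
    · refine ⟨a, .nil, .nil, by simp, ?_⟩
      have hq_len := hd q hq
      simp only [Walk.length_cons, Walk.edges_cons, List.countP_cons, he, not_false_eq_true,
        decide_true, if_true, Walk.length_nil]
      nlinarith

lemma Walk.IsPath.length_le_of_forall_isPath_length_le {d : ℕ}
    (hd : ∀ ⦃x y : V⦄ (q : T.Walk x y), q.IsPath → q.length ≤ d) {w : H.Walk u v}
    (hw : w.IsPath) : w.length ≤ w.edges.countP (· ∉ T.edgeSet) * (d + 1) + d := by
  obtain ⟨x, q, hq, -, hlen⟩ := hw.exists_isPath_length_le hd w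
  have := hd q hq
  omega

end CountOutside

lemma Connected.diam_le_of_isTree [Finite V] (hH : H.Connected) (hT : T.IsTree) :
    H.diam ≤ ((H.edgeSet \ T.edgeSet).ncard + 1) * T.diam + (H.edgeSet \ T.edgeSet).ncard := by
  classical
  have : Nonempty V := hH.nonempty
  obtain ⟨u, v, huv⟩ := H.exists_dist_eq_diam
  obtain ⟨p, hp, hp_len⟩ := hH.exists_path_of_dist u v
  have h_len := hp.length_le_of_forall_isPath_length_le
    (fun _ _ _ hq => hT.length_le_diam_of_isPath hq)
  have h_count := hp.isTrail.countP_not_mem_edgeSet_le (T := T)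
  rw [← huv, ← hp_len]
  nlinarith

end SimpleGraph

theorem stmt_4_general {V : Type*} [Fintype V] (T₁ T₂ : SimpleGraph V)
    (ht1 : T₁.IsTree) (ht2 : T₂.IsTree) (k : ℕ)
    (hk : (T₂.edgeSet \ T₁.edgeSet).ncard = k) :
    (T₂.diam : ℝ)/(k+1) - 1 ≤ (T₁.diam : ℝ) ∧
      (T₁.diam : ℝ) ≤ (k+1) * (T₂.diam : ℝ) + k := by
  have h₁₂ : T₁.diam ≤ (k + 1) * T₂.diam + k := by
    simpa [ht1.ncard_edgeSet_sdiff_comm ht2, hk] using ht1.connected.diam_le_of_isTree ht2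
  have h₂₁ : T₂.diam ≤ (k + 1) * T₁.diam + k := by
    simpa [hk] using ht2.connected.diam_le_of_isTree ht1
  have hk_pos : (0 : ℝ) < k + 1 := by positivity
  constructor
  · rw [div_sub_one hk_pos.ne', div_le_iff₀ hk_pos]
    have : (T₂.diam : ℝ) ≤ (k + 1) * T₁.diam + k := by exact_mod_cast h₂₁
    linarith
  · exact_mod_cast h₁₂

/-- If `T₁`, `T₂` are spanning trees of a finite connected graph `G` with exactly `k`
edges of `T₂` not in `T₁`, then `diam(T₂)/(k+1) - 1 ≤ diam(T₁) ≤ (k+1) diam(T₂) + k`. -/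
theorem stmt_4 {V : Type*} [Fintype V] (G T₁ T₂ : SimpleGraph V)
    (hG : G.Connected) (h1 : T₁ ≤ G) (h2 : T₂ ≤ G)
    (ht1 : T₁.IsTree) (ht2 : T₂.IsTree) (k : ℕ)
    (hk : (T₂.edgeSet \ T₁.edgeSet).ncard = k) :
    (T₂.diam : ℝ)/(k+1) - 1 ≤ (T₁.diam : ℝ) ∧
      (T₁.diam : ℝ) ≤ (k+1) * (T₂.diam : ℝ) + k :=
  stmt_4_general T₁ T₂ ht1 ht2 k hk
end

section
/- If G₂ is a connected subgraph of a finite connected graph G₁, then diam(G₁) ≤ diam(G₂) + 2·ℓ(G₁ \ G₂) + 2, where ℓ(G₁ \ G₂) denotes the length of the longest acyclic path in G₁ that avoids all vertices of G₂. -/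
private lemma aux_reach {V : Type*} (G : SimpleGraph V) (H : G.Subgraph) :
    ∀ {u w : V} (_ : G.Walk u w), u ∉ H.verts → w ∈ H.verts →
    ∃ x h, h ∈ H.verts ∧ G.Adj x h ∧ ∃ q : G.Walk u x, ∀ y ∈ q.support, y ∉ H.verts := by
  intro u w p
  induction p with
  | nil => intro hu hw; exact absurd hw hu
  | @cons u v w a p ih =>
    intro hu hw
    by_cases hv : v ∈ H.verts
    · exact ⟨u, v, hv, a, SimpleGraph.Walk.nil, by simpa using hu⟩
    · obtain ⟨x, h, hh, hadj, q, hq⟩ := ih hv hw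
      refine ⟨x, h, hh, hadj, SimpleGraph.Walk.cons a q, ?_⟩
      intro y hy
      rcases List.mem_cons.mp (by simpa using hy) with rfl | hy
      · exact hu
      · exact hq y hy

/-- If `G₂` (here `H.coe`) is a connected subgraph of a finite connected graph `G`, and
every acyclic path of `G` avoiding the vertices of the subgraph has length at most `L`,
then `diam(G) ≤ diam(G₂) + 2 L + 2`. -/
theorem stmt_5 {V : Type*} [Fintype V] (G : SimpleGraph V) (H : G.Subgraph)
    (hG : G.Connected) (hH : H.coe.Connected) (L : ℕ)
    (hL : ∀ (u v : V) (p : G.Walk u v), p.IsPath →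
      (∀ x ∈ p.support, x ∉ H.verts) → p.length ≤ L) :
    G.diam ≤ H.coe.diam + 2*L + 2 := by
  cases isEmpty_or_nonempty V with
  | inl h =>
    simp [SimpleGraph.diam, SimpleGraph.ediam, ciSup_of_empty]
  | inr h =>
    classical
    have hHne : Nonempty H.verts := hH.nonempty
    -- every vertex is within distance L+1 of H.verts
    have near : ∀ u : V, ∃ h ∈ H.verts, G.dist u h ≤ L + 1 := by
      intro u
      by_cases hu : u ∈ H.verts
      · exact ⟨u, hu, by rw [SimpleGraph.dist_self]; omega⟩
      · obtain ⟨⟨w, hw⟩⟩ := hHne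
        obtain ⟨p⟩ := hG.preconnected u w
        obtain ⟨x, hh, hhH, hadj, q, hq⟩ := aux_reach G H p hu hw
        refine ⟨hh, hhH, ?_⟩
        have hqp : q.toPath.1.length ≤ L := by
          apply hL u x q.toPath.1 q.toPath.2
          intro y hy
          exact hq y (q.support_toPath_subset hy)
        calc G.dist u hh ≤ G.dist u x + G.dist x hh := hG.dist_triangle
          _ ≤ L + 1 := by
              have h1 : G.dist u x ≤ L := le_trans (G.dist_le q.toPath.1) hqp
              have h2 : G.dist x hh ≤ 1 := by
                simpa using G.dist_le (SimpleGraph.Walk.cons hadj SimpleGraph.Walk.nil)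
              omega
    -- H.coe has finite ediam
    have hHediam : H.coe.ediam ≠ ⊤ := by
      obtain ⟨a, b, hab⟩ := H.coe.exists_edist_eq_ediam_of_finite
      rw [← hab, SimpleGraph.edist_ne_top_iff_reachable]
      exact hH.preconnected a b
    -- distance in G between H-vertices bounded by H.coe.diam
    have hGH : ∀ (a b : H.verts), G.dist a b ≤ H.coe.diam := by
      intro a b
      obtain ⟨p, hp⟩ := hH.exists_walk_length_eq_dist a b
      have : G.dist a b ≤ (p.map H.hom).length := G.dist_le _
      rw [SimpleGraph.Walk.length_map, hp] at this
      exact le_trans this (H.coe.dist_le_diam hHediam)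
    obtain ⟨u, v, huv⟩ := G.exists_dist_eq_diam
    rw [← huv]
    obtain ⟨h₁, hh₁, hd₁⟩ := near u
    obtain ⟨h₂, hh₂, hd₂⟩ := near v
    have t1 : G.dist u v ≤ G.dist u h₁ + G.dist h₁ v := hG.dist_triangle
    have t2 : G.dist h₁ v ≤ G.dist h₁ h₂ + G.dist h₂ v := hG.dist_triangle
    have t3 : G.dist h₁ h₂ ≤ H.coe.diam := hGH ⟨h₁, hh₁⟩ ⟨h₂, hh₂⟩
    have t4 : G.dist h₂ v ≤ L + 1 := by rw [G.dist_comm]; exact hd₂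
    omega
end
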